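/- For every integer k ≥ 1, the coefficients β_i^k satisfy ∑_{i=0}^k β_i^k = 0 and ∑_{i=1}^k i²·β_i^k = 1; consequently λ = 1 is a simple root of the characteristic polynomial P_β^k(λ) = ∑_{i=0}^k β_i^k λ^{k²−i²} (that is, P_β^k(1) = 0 and (P_β^k)′(1) = −1 ≠ 0), where β_0^k = −∑_{j=1}^k 1/j² and β_i^k = (−1)^{k−1}·(k!)² / (i² · ∏_{0≤j≤k, j≠i} (i² − j²)) for 1 ≤ i ≤ k. -/

import Mathlib

/-- The coefficients `β_i^k` of the non-equidistant derivative approximation: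
`β_0^k = -∑_{j=1}^k 1/j²` and
`β_i^k = (-1)^(k-1)·(k!)² / (i² · ∏_{0≤j≤k, j≠i} (i² − j²))` for `1 ≤ i ≤ k`. -/
noncomputable def betaCoef (k i : ℕ) : ℝ :=
  if i = 0 then -(∑ j ∈ Finset.Icc 1 k, (1 : ℝ) / (j : ℝ) ^ 2)
  else (-1) ^ (k - 1) * ((Nat.factorial k : ℝ)) ^ 2 /
    ((i : ℝ) ^ 2 * ∏ j ∈ (Finset.range (k + 1)).erase i, ((i : ℝ) ^ 2 - (j : ℝ) ^ 2))

/-- The characteristic polynomial `P_β^k(λ) = ∑_{i=0}^k β_i^k λ^(k²-i²)` of the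
non-equidistant multi-step scheme. -/
noncomputable def charPolyBeta (k : ℕ) : Polynomial ℝ :=
  ∑ i ∈ Finset.range (k + 1), Polynomial.C (betaCoef k i) * Polynomial.X ^ (k ^ 2 - i ^ 2)

/-!
The coefficients are derivatives of Lagrange basis polynomials: for the nodes `0², 1², …, k²`,
`β_i^k = L_i'(0)`. Differentiating the interpolation identities `∑ L_i = 1` and `∑ i² L_i = X`
at `0` gives `∑ β_i^k = 0` and `∑ i² β_i^k = 1`, and then `P(1) = ∑ β_i^k` and
`P'(1) = ∑ β_i^k (k² - i²) = -1`.
-/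

open Polynomial Finset Lagrange
open scoped Nat

section LagrangeDerivative

variable {F ι : Type*} [Field F] [DecidableEq ι] {s : Finset ι} {v : ι → F} {i j : ι}

theorem Lagrange.eval_derivative_eq_sum (hvs : Set.InjOn v s) {P : F[X]} (hP : P.degree < #s)
    (x : F) :
    (derivative P).eval x = ∑ i ∈ s, P.eval (v i) * (derivative (Lagrange.basis s v i)).eval x := by
  conv_lhs => rw [eq_interpolate hvs hP, interpolate_apply]
  simp [eval_finsetSum]

theorem Lagrange.eval_derivative_basis_self (hvs : Set.InjOn v s) (hi : i ∈ s) :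
    (derivative (Lagrange.basis s v i)).eval (v i) = ∑ j ∈ s.erase i, (v i - v j)⁻¹ := by
  rw [Lagrange.basis, derivative_prod_finset, eval_finsetSum]
  refine sum_congr rfl fun j _ => ?_
  have hdiv : ∀ l ∈ s.erase i, (basisDivisor (v i) (v l)).eval (v i) = 1 := fun l hl =>
    eval_basisDivisor_left_of_ne fun h => (mem_erase.1 hl).1 (hvs hi (mem_erase.1 hl).2 h).symm
  rw [eval_mul, eval_prod, prod_eq_one fun l hl => hdiv l (mem_of_mem_erase hl), one_mul]
  simp [basisDivisor]

theorem Lagrange.eval_derivative_basis_of_ne (hi : i ∈ s) (hj : j ∈ s) (hij : i ≠ j) :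
    (derivative (Lagrange.basis s v i)).eval (v j) =
      nodalWeight s v i * ∏ l ∈ (s.erase i).erase j, (v j - v l) := by
  rw [basis_eq_prod_sub_inv_mul_nodal_div hi, ← nodal_erase_eq_nodal_div hi, derivative_C_mul,
    eval_mul, eval_C, eval_nodal_derivative_eval_node_eq (mem_erase.2 ⟨hij.symm, hj⟩), eval_nodal]

end LagrangeDerivative

theorem Polynomial.eval_one_derivative_sum_C_mul_X_pow {R ι : Type*} [CommSemiring R]
    (s : Finset ι) (c : ι → R) (n : ι → ℕ) :
    (derivative (∑ i ∈ s, C (c i) * X ^ n i)).eval 1 = ∑ i ∈ s, c i * n i := by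
  simp [eval_finsetSum, derivative_X_pow]

theorem Finset.range_add_one_erase_zero (k : ℕ) : (range (k + 1)).erase 0 = Icc 1 k := by
  ext j
  simp only [mem_erase, mem_range, mem_Icc]
  omega

theorem Finset.prod_Icc_natCast_eq_factorial {R : Type*} [CommSemiring R] (k : ℕ) :
    ∏ j ∈ Icc 1 k, (j : R) = k ! := by
  rw [← Nat.cast_prod, ← Ico_add_one_right_eq_Icc, prod_Ico_id_eq_factorial]

theorem sq_mul_prod_Icc_erase_neg_sq {R : Type*} [CommRing R] {i k : ℕ} (hi : i ∈ Icc 1 k) :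
    (i : R) ^ 2 * ∏ j ∈ (Icc 1 k).erase i, -(j : R) ^ 2 = (-1) ^ (k - 1) * (k ! : R) ^ 2 := by
  have hcard : #((Icc 1 k).erase i) = k - 1 := by simp [card_erase_of_mem hi]
  rw [prod_neg, prod_pow, hcard, ← prod_Icc_natCast_eq_factorial, ← mul_prod_erase _ _ hi]
  ring

theorem injective_natCast_sq : Function.Injective fun j : ℕ => (j : ℝ) ^ 2 := fun a b h => by
  have h' : ((a ^ 2 : ℕ) : ℝ) = ((b ^ 2 : ℕ) : ℝ) := by push_cast; exact h
  exact Nat.pow_left_injective two_ne_zero (Nat.cast_injective h')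

theorem betaCoef_eq_eval_derivative_basis {k i : ℕ} (hi : i ∈ range (k + 1)) :
    betaCoef k i =
      (derivative (Lagrange.basis (range (k + 1)) (fun j : ℕ => (j : ℝ) ^ 2) i)).eval 0 := by
  have h0 : 0 ∈ range (k + 1) := mem_range.2 k.succ_pos
  have hv0 : (0 : ℝ) = (fun j : ℕ => (j : ℝ) ^ 2) 0 := by simp
  rw [hv0]
  rcases eq_or_ne i 0 with rfl | hi0
  · rw [eval_derivative_basis_self injective_natCast_sq.injOn h0, range_add_one_erase_zero,
      betaCoef, if_pos rfl, ← sum_neg_distrib]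
    refine sum_congr rfl fun j _ => ?_
    simp
  · have hiIcc : i ∈ Icc 1 k := by rw [← range_add_one_erase_zero]; exact mem_erase.2 ⟨hi0, hi⟩
    rw [eval_derivative_basis_of_ne (v := fun j : ℕ => (j : ℝ) ^ 2) hi h0 hi0, nodalWeight,
      erase_right_comm, range_add_one_erase_zero, betaCoef, if_neg hi0,
      ← sq_mul_prod_Icc_erase_neg_sq hiIcc,
      mul_div_mul_left _ _ (pow_ne_zero 2 (Nat.cast_ne_zero.2 hi0)), prod_inv_distrib]
    simp [div_eq_inv_mul]

theorem sum_betaCoef (k : ℕ) : ∑ i ∈ range (k + 1), betaCoef k i = 0 :=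
  calc ∑ i ∈ range (k + 1), betaCoef k i
      = ∑ i ∈ range (k + 1), (1 : ℝ[X]).eval ((i : ℝ) ^ 2) *
          (derivative (Lagrange.basis (range (k + 1)) (fun j : ℕ => (j : ℝ) ^ 2) i)).eval 0 :=
        sum_congr rfl fun i hi => by rw [betaCoef_eq_eval_derivative_basis hi, eval_one, one_mul]
    _ = (derivative (1 : ℝ[X])).eval 0 := by
        refine (eval_derivative_eq_sum injective_natCast_sq.injOn ?_ 0).symm
        rw [degree_one, card_range]
        exact_mod_cast k.succ_pos
    _ = 0 := by simp

theorem sum_sq_mul_betaCoef {k : ℕ} (hk : 1 ≤ k) :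
    ∑ i ∈ range (k + 1), (i : ℝ) ^ 2 * betaCoef k i = 1 :=
  calc ∑ i ∈ range (k + 1), (i : ℝ) ^ 2 * betaCoef k i
      = ∑ i ∈ range (k + 1), (X : ℝ[X]).eval ((i : ℝ) ^ 2) *
          (derivative (Lagrange.basis (range (k + 1)) (fun j : ℕ => (j : ℝ) ^ 2) i)).eval 0 :=
        sum_congr rfl fun i hi => by rw [betaCoef_eq_eval_derivative_basis hi, eval_X]
    _ = (derivative (X : ℝ[X])).eval 0 := by
        refine (eval_derivative_eq_sum injective_natCast_sq.injOn ?_ 0).symm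
        rw [degree_X, card_range]
        exact_mod_cast Nat.succ_lt_succ hk
    _ = 1 := by simp

/-- `∑_{i=0}^k β_i^k = 0` and `∑_{i=1}^k i²·β_i^k = 1`; consequently `λ = 1` is a simple root
of `P_β^k`: `P_β^k(1) = 0` and `(P_β^k)′(1) = −1 ≠ 0`. -/
theorem beta_consistency_and_simple_root_one (k : ℕ) (hk : 1 ≤ k) :
    (∑ i ∈ Finset.range (k + 1), betaCoef k i = 0) ∧
    (∑ i ∈ Finset.Icc 1 k, (i : ℝ) ^ 2 * betaCoef k i = 1) ∧
    (charPolyBeta k).eval 1 = 0 ∧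
    (Polynomial.derivative (charPolyBeta k)).eval 1 = -1 := by
  have h₀ := sum_betaCoef k
  have h₂ := sum_sq_mul_betaCoef hk
  refine ⟨h₀, ?_, ?_, ?_⟩
  · rwa [← range_add_one_erase_zero, sum_erase _ (by simp)]
  · simpa [charPolyBeta, eval_finsetSum] using h₀
  · rw [charPolyBeta, eval_one_derivative_sum_C_mul_X_pow]
    calc ∑ i ∈ range (k + 1), betaCoef k i * ((k ^ 2 - i ^ 2 : ℕ) : ℝ)
        = (k : ℝ) ^ 2 * ∑ i ∈ range (k + 1), betaCoef k i
            - ∑ i ∈ range (k + 1), (i : ℝ) ^ 2 * betaCoef k i := by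
          rw [mul_sum, ← sum_sub_distrib]
          refine sum_congr rfl fun i hi => ?_
          rw [Nat.cast_sub (Nat.pow_le_pow_left (mem_range_succ_iff.1 hi) 2)]
          push_cast
          ring
      _ = -1 := by rw [h₀, h₂]; ring
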